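/- Let L be a finite-dimensional solvable left Leibniz algebra, M a self-normalizing maximal subalgebra of L with core N, and A/N the unique minimal ideal of L/N. Then L/N is the semidirect sum of A/N and M/N, i.e. L/N = A/N + M/N and (A/N) ∩ (M/N) = 0. -/
import Mathlib

set_option linter.unnecessarySimpa false

/-- The left Leibniz identity for a bilinear bracket `B`. -/
def LeibnizId {F L : Type*} [Field F] [AddCommGroup L] [Module F L]
    (B : L →ₗ[F] L →ₗ[F] L) : Prop :=
  ∀ a b c : L, B a (B b c) = B (B a b) c + B b (B a c)

/-- The span of all brackets `[s,t]` with `s ∈ S`, `t ∈ T`. -/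
def lbrk {F L : Type*} [Field F] [AddCommGroup L] [Module F L]
    (B : L →ₗ[F] L →ₗ[F] L) (S T : Submodule F L) : Submodule F L :=
  Submodule.span F {z : L | ∃ s ∈ S, ∃ t ∈ T, z = B s t}

/-- A subspace closed under the bracket. -/
def IsLeibSubalg {F L : Type*} [Field F] [AddCommGroup L] [Module F L]
    (B : L →ₗ[F] L →ₗ[F] L) (S : Submodule F L) : Prop :=
  ∀ x ∈ S, ∀ y ∈ S, B x y ∈ S

/-- A (two-sided) ideal. -/
def IsLeibIdeal {F L : Type*} [Field F] [AddCommGroup L] [Module F L]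
    (B : L →ₗ[F] L →ₗ[F] L) (S : Submodule F L) : Prop :=
  (∀ x : L, ∀ y ∈ S, B x y ∈ S) ∧ (∀ y ∈ S, ∀ x : L, B y x ∈ S)

/-- Lower central series: `L^1 = L`, `L^{n+1} = [L, L^n]`. -/
def leibLCS {F L : Type*} [Field F] [AddCommGroup L] [Module F L]
    (B : L →ₗ[F] L →ₗ[F] L) : ℕ → Submodule F L
  | 0 => ⊤
  | n + 1 => lbrk B ⊤ (leibLCS B n)

def LeibIsNilpotent {F L : Type*} [Field F] [AddCommGroup L] [Module F L]
    (B : L →ₗ[F] L →ₗ[F] L) : Prop :=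
  ∃ n, leibLCS B n = ⊥

/-- Lower central series of a subalgebra `S`. -/
def leibLCSIn {F L : Type*} [Field F] [AddCommGroup L] [Module F L]
    (B : L →ₗ[F] L →ₗ[F] L) (S : Submodule F L) : ℕ → Submodule F L
  | 0 => S
  | n + 1 => lbrk B S (leibLCSIn B S n)

/-- A subalgebra `S` is nilpotent (as an algebra in its own right). -/
def LeibSubalgNilpotent {F L : Type*} [Field F] [AddCommGroup L] [Module F L]
    (B : L →ₗ[F] L →ₗ[F] L) (S : Submodule F L) : Prop :=
  ∃ n, leibLCSIn B S n = ⊥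

/-- Derived series. -/
def leibDerived {F L : Type*} [Field F] [AddCommGroup L] [Module F L]
    (B : L →ₗ[F] L →ₗ[F] L) : ℕ → Submodule F L
  | 0 => ⊤
  | n + 1 => lbrk B (leibDerived B n) (leibDerived B n)

def LeibIsSolvable {F L : Type*} [Field F] [AddCommGroup L] [Module F L]
    (B : L →ₗ[F] L →ₗ[F] L) : Prop :=
  ∃ n, leibDerived B n = ⊥

/-- The normalizer of a subspace `S`: elements `x` with `[x,S] ⊆ S` and `[S,x] ⊆ S`. -/
def leibNormalizer {F L : Type*} [Field F] [AddCommGroup L] [Module F L]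
    (B : L →ₗ[F] L →ₗ[F] L) (S : Submodule F L) : Submodule F L where
  carrier := {x : L | ∀ m ∈ S, B x m ∈ S ∧ B m x ∈ S}
  add_mem' := by
    intro x y hx hy m hm
    constructor
    · have := S.add_mem (hx m hm).1 (hy m hm).1
      simpa [map_add] using this
    · have := S.add_mem (hx m hm).2 (hy m hm).2
      simpa [map_add] using this
  zero_mem' := by
    intro m hm
    constructor
    · simpa [map_zero] using S.zero_mem
    · simpa [map_zero] using S.zero_mem
  smul_mem' := by
    intro c x hx m hm
    constructor
    · have := S.smul_mem c (hx m hm).1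
      simpa [map_smul] using this
    · have := S.smul_mem c (hx m hm).2
      simpa [map_smul] using this

/-- `Leib(L)`: the span of all squares. -/
def leibLeib {F L : Type*} [Field F] [AddCommGroup L] [Module F L]
    (B : L →ₗ[F] L →ₗ[F] L) : Submodule F L :=
  Submodule.span F {z : L | ∃ y : L, z = B y y}

/-- A maximal (proper) subalgebra. -/
def IsMaxSubalg {F L : Type*} [Field F] [AddCommGroup L] [Module F L]
    (B : L →ₗ[F] L →ₗ[F] L) (S : Submodule F L) : Prop :=
  IsLeibSubalg B S ∧ S ≠ ⊤ ∧ ∀ T : Submodule F L, IsLeibSubalg B T → S < T → T = ⊤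

/-- `N` is the core of `M`: the largest ideal of `L` contained in `M`. -/
def IsCore {F L : Type*} [Field F] [AddCommGroup L] [Module F L]
    (B : L →ₗ[F] L →ₗ[F] L) (M N : Submodule F L) : Prop :=
  IsLeibIdeal B N ∧ N ≤ M ∧ ∀ C : Submodule F L, IsLeibIdeal B C → C ≤ M → C ≤ N

/-- Minimal nonnilpotent: nonnilpotent, solvable, all proper subalgebras nilpotent. -/
def MinNonnilpotent {F L : Type*} [Field F] [AddCommGroup L] [Module F L]
    (B : L →ₗ[F] L →ₗ[F] L) : Prop :=
  ¬ LeibIsNilpotent B ∧ LeibIsSolvable B ∧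
    ∀ S : Submodule F L, IsLeibSubalg B S → S ≠ ⊤ → LeibSubalgNilpotent B S

/-- Cyclic: generated as an algebra by a single element. -/
def LeibCyclic {F L : Type*} [Field F] [AddCommGroup L] [Module F L]
    (B : L →ₗ[F] L →ₗ[F] L) : Prop :=
  ∃ z : L, ∀ S : Submodule F L, IsLeibSubalg B S → z ∈ S → S = ⊤

section Aux

variable {F L : Type*} [Field F] [AddCommGroup L] [Module F L]
  (B : L →ₗ[F] L →ₗ[F] L)

lemma lbrk_le {S T U : Submodule F L}
    (h : ∀ s ∈ S, ∀ t ∈ T, B s t ∈ U) : lbrk B S T ≤ U := by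
  apply Submodule.span_le.2
  rintro z ⟨s, hs, t, ht, rfl⟩
  exact h s hs t ht

lemma mem_lbrk {S T : Submodule F L} {s t : L} (hs : s ∈ S) (ht : t ∈ T) :
    B s t ∈ lbrk B S T :=
  Submodule.subset_span ⟨s, hs, t, ht, rfl⟩

lemma lbrk_mono {S S' T T' : Submodule F L} (hS : S ≤ S') (hT : T ≤ T') :
    lbrk B S T ≤ lbrk B S' T' :=
  lbrk_le B fun s hs t ht => mem_lbrk B (hS hs) (hT ht)

lemma lbrk_sup_ideal {X Y N : Submodule F L} (hN : IsLeibIdeal B N) :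
    lbrk B (X ⊔ N) (Y ⊔ N) ≤ lbrk B X Y ⊔ N := by
  apply lbrk_le
  intro s hs t ht
  obtain ⟨x, hx, n, hn, rfl⟩ := Submodule.mem_sup.1 hs
  obtain ⟨y, hy, n', hn', rfl⟩ := Submodule.mem_sup.1 ht
  have : B (x + n) (y + n') = B x y + (B x n' + B n (y + n')) := by
    simp [map_add]; abel
  rw [this]
  exact Submodule.add_mem _ (Submodule.mem_sup_left (mem_lbrk B hx hy))
    (Submodule.mem_sup_right (Submodule.add_mem _ (hN.1 x n' hn') (hN.2 n hn _)))

/-- If `[A,A] ⊔ N = A` with `N` an ideal and `L` solvable, then `A ≤ N`. -/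
lemma solvable_forces {A N : Submodule F L} (hsolv : LeibIsSolvable B)
    (hN : IsLeibIdeal B N) (hAA : lbrk B A A ⊔ N = A) : A ≤ N := by
  have key : ∀ k, A ≤ leibDerived B k ⊔ N := by
    intro k
    induction k with
    | zero => simpa [leibDerived] using le_sup_left.trans (le_refl _)
    | succ k ih =>
      calc A = lbrk B A A ⊔ N := hAA.symm
        _ ≤ lbrk B (leibDerived B k ⊔ N) (leibDerived B k ⊔ N) ⊔ N :=
            sup_le_sup_right (lbrk_mono B ih ih) N
        _ ≤ (lbrk B (leibDerived B k) (leibDerived B k) ⊔ N) ⊔ N :=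
            sup_le_sup_right (lbrk_sup_ideal B hN) N
        _ = leibDerived B (k + 1) ⊔ N := by rw [sup_assoc, sup_idem]; rfl
  obtain ⟨n, hn⟩ := hsolv
  have := key n
  rwa [hn, bot_sup_eq] at this

end Aux

/-- with `A/N` the unique minimal ideal of `L/N`, the quotient `L/N` is the
semidirect sum of `A/N` and `M/N`: `A ⊔ M = L` and `A ⊓ M = N`. -/
theorem stmt3 {F L : Type*} [Field F] [AddCommGroup L] [Module F L] [FiniteDimensional F L]
    (B : L →ₗ[F] L →ₗ[F] L) (hB : LeibnizId B) (hsolv : LeibIsSolvable B)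
    (M N : Submodule F L) (hM : IsMaxSubalg B M) (hself : leibNormalizer B M = M)
    (hN : IsCore B M N)
    (A : Submodule F L) (hA : IsLeibIdeal B A ∧ N < A ∧
      ∀ C : Submodule F L, IsLeibIdeal B C → N < C → C ≤ A → C = A) :
    A ⊔ M = ⊤ ∧ A ⊓ M = N := by
  obtain ⟨hAideal, hNA, hAmin⟩ := hA
  obtain ⟨hNideal, hNM, hcore⟩ := hN
  -- A is not contained in M
  have hAnotM : ¬ A ≤ M := fun h => absurd (hcore A hAideal h) (not_le_of_gt hNA)
  -- A ⊔ M is a subalgebra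
  have hsub : IsLeibSubalg B (A ⊔ M) := by
    intro x hx y hy
    obtain ⟨a, ha, m, hm, rfl⟩ := Submodule.mem_sup.1 hx
    obtain ⟨a', ha', m', hm', rfl⟩ := Submodule.mem_sup.1 hy
    have : B (a + m) (a' + m') = (B a (a' + m') + B m a') + B m m' := by
      simp [map_add]; abel
    rw [this]
    exact Submodule.add_mem _
      (Submodule.mem_sup_left (A.add_mem (hAideal.2 a ha _) (hAideal.1 m a' ha')))
      (Submodule.mem_sup_right (hM.1 m hm m' hm'))
  -- Part 1 : A ⊔ M = ⊤
  have hsup : A ⊔ M = ⊤ := by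
    refine hM.2.2 _ hsub (lt_of_le_of_ne le_sup_right ?_)
    intro h
    exact hAnotM (le_sup_left.trans_eq h.symm)
  refine ⟨hsup, ?_⟩
  -- [A,A] ⊔ N is an ideal of L contained in A
  have hAAN_le : lbrk B A A ⊔ N ≤ A := by
    refine sup_le (lbrk_le B fun s hs t ht => hAideal.1 s t ht) hNA.le
  have hAAN_ideal : IsLeibIdeal B (lbrk B A A ⊔ N) := by
    constructor
    · intro x y hy
      obtain ⟨z, hz, n, hn, rfl⟩ := Submodule.mem_sup.1 hy
      rw [map_add]
      refine Submodule.add_mem _ ?_ (Submodule.mem_sup_right (hNideal.1 x n hn))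
      have : lbrk B A A ≤ Submodule.comap (B x) (lbrk B A A ⊔ N) := by
        apply lbrk_le
        intro a ha a' ha'
        simp only [Submodule.mem_comap]
        rw [hB x a a']
        exact Submodule.mem_sup_left (Submodule.add_mem _
          (mem_lbrk B (hAideal.1 x a ha) ha') (mem_lbrk B ha (hAideal.1 x a' ha')))
      exact this hz
    · intro y hy x
      obtain ⟨z, hz, n, hn, rfl⟩ := Submodule.mem_sup.1 hy
      rw [map_add, LinearMap.add_apply]
      refine Submodule.add_mem _ ?_ (Submodule.mem_sup_right (hNideal.2 n hn x))
      have : lbrk B A A ≤ Submodule.comap (B.flip x) (lbrk B A A ⊔ N) := by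
        apply lbrk_le
        intro a ha a' ha'
        simp only [Submodule.mem_comap, LinearMap.flip_apply]
        have heq : B (B a a') x = B a (B a' x) - B a' (B a x) := by
          rw [hB a a' x]; abel
        rw [heq]
        exact Submodule.sub_mem _
          (Submodule.mem_sup_left (mem_lbrk B ha (hAideal.2 a' ha' x)))
          (Submodule.mem_sup_left (mem_lbrk B ha' (hAideal.2 a ha x)))
      exact this hz
  -- [A,A] ≤ N
  have hAA_le_N : lbrk B A A ≤ N := by
    by_cases h : lbrk B A A ⊔ N = A
    · exact absurd (solvable_forces B hsolv hNideal h) (not_le_of_gt hNA)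
    · have hle : N ≤ lbrk B A A ⊔ N := le_sup_right
      rcases eq_or_lt_of_le hle with heq | hlt
      · rw [heq]; exact le_sup_left
      · exact absurd (hAmin _ hAAN_ideal hlt hAAN_le) h
  -- A ⊓ M is an ideal of L
  have hNle : N ≤ A ⊓ M := le_inf hNA.le hNM
  have hinter_ideal : IsLeibIdeal B (A ⊓ M) := by
    constructor
    · intro x d hd
      obtain ⟨a, ha, m, hm, rfl⟩ : ∃ a ∈ A, ∃ m ∈ M, a + m = x := by
        have : x ∈ A ⊔ M := hsup ▸ Submodule.mem_top
        exact Submodule.mem_sup.1 this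
      rw [map_add, LinearMap.add_apply]
      refine Submodule.add_mem _ (hNle (hAA_le_N (mem_lbrk B ha hd.1))) ?_
      exact ⟨hAideal.1 m d hd.1, hM.1 m hm d hd.2⟩
    · intro d hd x
      obtain ⟨a, ha, m, hm, rfl⟩ : ∃ a ∈ A, ∃ m ∈ M, a + m = x := by
        have : x ∈ A ⊔ M := hsup ▸ Submodule.mem_top
        exact Submodule.mem_sup.1 this
      rw [map_add]
      refine Submodule.add_mem _ (hNle (hAA_le_N (mem_lbrk B hd.1 ha))) ?_
      exact ⟨hAideal.2 d hd.1 m, hM.1 d hd.2 m hm⟩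
  -- conclude
  exact le_antisymm (hcore _ hinter_ideal inf_le_right) hNle
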